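/- Let D̃₀ be a linear map with D̃₁∘D̃₀ = 0, and suppose the Poincaré inequality ‖D̃₀ q‖²_{M₁} ≥ μ·‖q‖²_{L²} holds for all q in a subspace Q₀ with μ > 0. Define the norm ‖w‖²_{H¹} = ‖w‖²_{M₁} + ‖D̃₁ w‖²_{M₂} and the bilinear form b(w,q) = ⟨D̃₀ q, w⟩_{M₁}. Then inf_{q ∈ Q₀, q≠0} sup_{w≠0} |b(w,q)| / (‖w‖_{H¹}·‖q‖_{L²}) ≥ √μ. -/

import Mathlib

/-- Discrete inf-sup condition from the cochain complex and the Poincaré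
inequality: with D̃₁∘D̃₀ = 0 and ‖D̃₀q‖² ≥ μ‖q‖² on Q₀, the bilinear form
b(w,q) = ⟨D̃₀q, w⟩ satisfies the inf-sup bound with constant √μ, i.e. for every
nonzero q ∈ Q₀ there is a nonzero w with
√μ·‖w‖_{H¹}·‖q‖ ≤ |b(w,q)|, where ‖w‖²_{H¹} = ‖w‖² + ‖D̃₁w‖². -/
theorem discrete_infsup (Q V Z : Type*)
    [NormedAddCommGroup Q] [InnerProductSpace ℝ Q]
    [NormedAddCommGroup V] [InnerProductSpace ℝ V]
    [NormedAddCommGroup Z] [InnerProductSpace ℝ Z]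
    (d0 : Q →ₗ[ℝ] V) (d1 : V →ₗ[ℝ] Z)
    (hcomplex : ∀ q : Q, d1 (d0 q) = 0)
    (Q₀ : Submodule ℝ Q) (μ : ℝ) (hμ : 0 < μ)
    (hPoincare : ∀ q ∈ Q₀, μ * ‖q‖ ^ 2 ≤ ‖d0 q‖ ^ 2) :
    ∀ q ∈ Q₀, q ≠ 0 → ∃ w : V, w ≠ 0 ∧
      Real.sqrt μ * (Real.sqrt (‖w‖ ^ 2 + ‖d1 w‖ ^ 2) * ‖q‖) ≤
        |(inner ℝ (d0 q) w : ℝ)| := by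
  intro q hq hq0
  have hpos : 0 < ‖d0 q‖ ^ 2 := by
    have h1 : 0 < ‖q‖ ^ 2 := by
      have := norm_pos_iff.mpr hq0
      positivity
    calc (0:ℝ) < μ * ‖q‖ ^ 2 := by positivity
      _ ≤ ‖d0 q‖ ^ 2 := hPoincare q hq
  have hw0 : d0 q ≠ 0 := by
    intro h
    rw [h] at hpos
    simp at hpos
  refine ⟨d0 q, hw0, ?_⟩
  rw [hcomplex q]
  simp only [norm_zero, ne_eq]
  have h2 : Real.sqrt (‖d0 q‖ ^ 2 + 0 ^ 2) = ‖d0 q‖ := by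
    rw [zero_pow (by norm_num), add_zero, Real.sqrt_sq (norm_nonneg _)]
  rw [h2, real_inner_self_eq_norm_sq]
  have hle : Real.sqrt μ * ‖q‖ ≤ ‖d0 q‖ := by
    have := hPoincare q hq
    have h3 : (Real.sqrt μ * ‖q‖) ^ 2 ≤ ‖d0 q‖ ^ 2 := by
      rw [mul_pow, Real.sq_sqrt hμ.le]
      exact this
    have h4 : 0 ≤ Real.sqrt μ * ‖q‖ := by positivity
    nlinarith [norm_nonneg (d0 q)]
  calc Real.sqrt μ * (‖d0 q‖ * ‖q‖) = (Real.sqrt μ * ‖q‖) * ‖d0 q‖ := by ring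
    _ ≤ ‖d0 q‖ * ‖d0 q‖ := by
        apply mul_le_mul_of_nonneg_right hle (norm_nonneg _)
    _ = ‖d0 q‖ ^ 2 := by ring
    _ ≤ |‖d0 q‖ ^ 2| := le_abs_self _
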